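/- For every f ∈ C_c(W), the linear representation f̂ : μ ↦ ∫ f dμ is a continuous real-valued function on (M^∞, OT_∞); that is, if OT_∞(μ_n, μ) → 0 then ∫ f dμ_n → ∫ f dμ. -/

import Mathlib

/-! Common setup: the birth-death plane, Radon measures, partial optimal transport. -/

noncomputable section

open MeasureTheory Topology Filter Set
open scoped ENNReal

/-- The ambient plane `ℝ²` (with the sup-norm, i.e. `q = ∞`). -/
abbrev P2 : Type := ℝ × ℝ

/-- The birth-death plane `W = {(b,d) : b < d}`. -/
def Wbd : Set P2 := {p | p.1 < p.2}

/-- The closure `W̄` of the birth-death plane. -/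
def Wcl : Set P2 := closure Wbd

/-- The diagonal `Δ`. -/
def Diag : Set P2 := {p | p.1 = p.2}

/-- Distance from a point to the diagonal, `‖x - Δ‖`. -/
def distDiag (x : P2) : ℝ := Metric.infDist x Diag

/-- The pseudometric `d(x,y) = min(‖x-y‖, ‖x-Δ‖ + ‖y-Δ‖)` on `W̄`. -/
def dW (x y : P2) : ℝ := min (dist x y) (distDiag x + distDiag y)

/-- The support of a Borel measure: points all of whose neighborhoods have
positive measure. -/
def msupport {α : Type*} [TopologicalSpace α] [MeasurableSpace α] (μ : Measure α) : Set α :=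
  {x | ∀ U ∈ 𝓝 x, 0 < μ U}

/-- `μ` is a Radon measure on the subspace `S`: it vanishes off `S`, is inner regular
(on relatively open sets) by compact sets, outer regular (by relatively open sets), and finite
on compact subsets of `S`. -/
def RadonOn {α : Type*} [TopologicalSpace α] [MeasurableSpace α] (S : Set α)
    (μ : Measure α) : Prop :=
  μ Sᶜ = 0 ∧
  (∀ U : Set α, IsOpen U → μ (U ∩ S) = ⨆ (K : Set α) (_ : K ⊆ U ∩ S) (_ : IsCompact K), μ K) ∧
  (∀ E : Set α, E ⊆ S → MeasurableSet E →
    μ E = ⨅ (U : Set α) (_ : IsOpen U) (_ : E ⊆ U), μ (U ∩ S)) ∧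
  (∀ K : Set α, K ⊆ S → IsCompact K → μ K < ⊤)

/-- The set `M` of Radon measures on `W`. -/
def MRadon : Set (Measure P2) := {μ | RadonOn Wbd μ}

/-- `pers_∞(μ) = sup{‖x-Δ‖ : x ∈ spt μ}` (valued in `ℝ≥0∞`). -/
def persInf (μ : Measure P2) : ℝ≥0∞ := ⨆ x ∈ msupport μ, ENNReal.ofReal (distDiag x)

/-- The space `M^∞` of Radon measures on `W` with finite `∞`-persistence. -/
def MInf : Set (Measure P2) := {μ | RadonOn Wbd μ ∧ persInf μ < ⊤}

/-- A coupling (admissible transport plan) between `μ` and `ν`: a Radon measure on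
`W̄ × W̄` whose marginals restricted to Borel subsets of `W` are `μ` and `ν`. -/
def IsCoupling (π : Measure (P2 × P2)) (μ ν : Measure P2) : Prop :=
  RadonOn (Wcl ×ˢ Wcl) π ∧
  (∀ A : Set P2, A ⊆ Wbd → MeasurableSet A → π (A ×ˢ Wcl) = μ A) ∧
  (∀ B : Set P2, B ⊆ Wbd → MeasurableSet B → π (Wcl ×ˢ B) = ν B)

/-- The `∞`-cost of a transport plan: `sup {d(x,y) : (x,y) ∈ spt π}`. -/
def costInf (π : Measure (P2 × P2)) : ℝ≥0∞ :=
  ⨆ p ∈ msupport π, ENNReal.ofReal (dW p.1 p.2)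

/-- The partial `∞`-optimal transport distance. -/
def OT (μ ν : Measure P2) : ℝ≥0∞ :=
  ⨅ (π : Measure (P2 × P2)) (_ : IsCoupling π μ ν), costInf π

/-- `W_ε = {(x,y) : y - x > ε}`. -/
def Weps (ε : ℝ) : Set P2 := {p | p.2 - p.1 > ε}

/-- The space `M_f^∞` of off-diagonally finite measures. -/
def Mf : Set (Measure P2) := {μ | μ ∈ MInf ∧ ∀ ε : ℝ, 0 < ε → μ (Weps ε) < ⊤}

/-- The space `M_fin^∞` of finite measures in `M^∞`. -/
def Mfin : Set (Measure P2) := {μ | μ ∈ MInf ∧ μ Wbd < ⊤}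

/-- `f ∈ C_c(W)`: a continuous function, compactly supported, with support contained
in the open set `W` (extended by zero to the plane). -/
def IsCcW (f : P2 → ℝ) : Prop :=
  Continuous f ∧ HasCompactSupport f ∧ tsupport f ⊆ Wbd

/-- Convergence of a sequence of measures to `μ` in the distance `OT_∞`. -/
def OTConv (u : ℕ → Measure P2) (μ : Measure P2) : Prop :=
  Tendsto (fun n => OT (u n) μ) atTop (𝓝 0)

/-!
A coupling of cost `< η` moves `π`-almost every point by `d`-distance `< η`. Choose `r > 0` with
`K' = cthickening r (tsupport f) ⊆ W`. Points of `tsupport f` are at distance `≥ r` from the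
diagonal, so for `η ≤ r` a pair of points `(x, y)` with `d(x, y) < η` and `f x ≠ 0` or `f y ≠ 0`
cannot be matched through the diagonal: it satisfies `‖x - y‖ < η` and lies in `K' × K'`. Hence
`∫ f dμₙ - ∫ f dμ = ∫_{K' × K'} (f x - f y) dπ`, which is at most `ω_f(η) · μ(K')` in absolute
value, where `ω_f` is the modulus of uniform continuity of `f`.
-/

open Metric

theorem isOpen_Wbd : IsOpen Wbd := isOpen_lt continuous_fst continuous_snd

theorem msupport_eq_support {α : Type*} [TopologicalSpace α] [MeasurableSpace α]
    (μ : Measure α) : msupport μ = μ.support :=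
  Set.ext fun x => (Measure.mem_support_iff_forall x).symm

theorem ae_mem_msupport {α : Type*} [TopologicalSpace α] [HereditarilyLindelofSpace α]
    [MeasurableSpace α] (μ : Measure α) : ∀ᵐ x ∂μ, x ∈ msupport μ := by
  rw [msupport_eq_support]
  exact Measure.support_mem_ae

theorem le_distDiag_of_cthickening_subset {K : Set P2} {r : ℝ} (hK : cthickening r K ⊆ Wbd)
    {x : P2} (hx : x ∈ K) : r ≤ distDiag x := by
  have hDiag : Diag.Nonempty := ⟨((0 : ℝ), (0 : ℝ)), rfl⟩
  refine (le_infDist hDiag).2 fun z (hz : z.1 = z.2) => ?_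
  by_contra! hxz
  have hzK : z ∈ cthickening r K := mem_cthickening_of_dist_le z x r K hx (dist_comm z x ▸ hxz.le)
  exact (hK hzK).ne hz

theorem dist_lt_of_dW_lt {x y : P2} {η : ℝ} (h : dW x y < η)
    (hxy : η ≤ distDiag x ∨ η ≤ distDiag y) : dist x y < η := by
  have hx : 0 ≤ distDiag x := infDist_nonneg
  have hy : 0 ≤ distDiag y := infDist_nonneg
  refine (min_lt_iff.1 h).resolve_right fun hsum => ?_
  rcases hxy with hxy | hxy <;> linarith

theorem mem_cthickening_of_dW_lt {K : Set P2} {r η : ℝ} (hK : cthickening r K ⊆ Wbd)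
    (hηr : η ≤ r) {x y : P2} (hxy : dW x y < η) (hxyK : x ∈ K ∨ y ∈ K) :
    x ∈ cthickening r K ∧ y ∈ cthickening r K ∧ dist x y < η := by
  have hdist : dist x y < η := dist_lt_of_dW_lt hxy <|
    hxyK.imp (fun hx => hηr.trans (le_distDiag_of_cthickening_subset hK hx))
      (fun hy => hηr.trans (le_distDiag_of_cthickening_subset hK hy))
  rcases hxyK with hx | hy
  · exact ⟨self_subset_cthickening K hx,
      mem_cthickening_of_dist_le y x r K hx (by rw [dist_comm]; linarith), hdist⟩
  · exact ⟨mem_cthickening_of_dist_le x y r K hy (by linarith),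
      self_subset_cthickening K hy, hdist⟩

theorem dW_lt_of_costInf_lt {π : Measure (P2 × P2)} {η : ℝ} (hcost : costInf π < ENNReal.ofReal η)
    {p : P2 × P2} (hp : p ∈ msupport π) : dW p.1 p.2 < η := by
  have hle : ENNReal.ofReal (dW p.1 p.2) ≤ costInf π :=
    le_iSup₂ (f := fun (p : P2 × P2) (_ : p ∈ msupport π) => ENNReal.ofReal (dW p.1 p.2)) p hp
  exact (ENNReal.ofReal_lt_ofReal_iff'.1 (hle.trans_lt hcost)).1

theorem exists_isCoupling_costInf_lt {μ ν : Measure P2} {c : ℝ≥0∞} (h : OT μ ν < c) :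
    ∃ π, IsCoupling π μ ν ∧ costInf π < c := by
  simpa only [OT, iInf_lt_iff, exists_prop] using h

theorem ae_mem_cthickening_prod_of_costInf_lt {K : Set P2} {r η : ℝ} (hK : cthickening r K ⊆ Wbd)
    (hηr : η ≤ r) {π : Measure (P2 × P2)} (hcost : costInf π < ENNReal.ofReal η) :
    ∀ᵐ p ∂π, p.1 ∈ K ∨ p.2 ∈ K →
      p ∈ cthickening r K ×ˢ cthickening r K ∧ dist p.1 p.2 < η := by
  filter_upwards [ae_mem_msupport π] with p hp hpK
  obtain ⟨hx, hy, hdist⟩ := mem_cthickening_of_dW_lt hK hηr (dW_lt_of_costInf_lt hcost hp) hpK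
  exact ⟨⟨hx, hy⟩, hdist⟩

namespace IsCoupling

variable {π : Measure (P2 × P2)} {μ ν : Measure P2}

theorem measure_preimage_fst (h : IsCoupling π μ ν) {A : Set P2} (hA : A ⊆ Wbd)
    (hAm : MeasurableSet A) : π (Prod.fst ⁻¹' A) = μ A := by
  have hnull : π (Prod.snd ⁻¹' Wcl)ᶜ = 0 :=
    measure_mono_null (compl_subset_compl.2 fun _ hp => hp.2) h.1.1
  rw [← h.2.1 A hA hAm, Set.prod_eq, measure_inter_conull hnull]

theorem measure_preimage_snd (h : IsCoupling π μ ν) {B : Set P2} (hB : B ⊆ Wbd)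
    (hBm : MeasurableSet B) : π (Prod.snd ⁻¹' B) = ν B := by
  have hnull : π (Prod.fst ⁻¹' Wcl)ᶜ = 0 :=
    measure_mono_null (compl_subset_compl.2 fun _ hp => hp.1) h.1.1
  rw [← h.2.2 B hB hBm, Set.prod_eq, inter_comm, measure_inter_conull hnull]

theorem restrict_map_fst (h : IsCoupling π μ ν) :
    (π.map Prod.fst).restrict Wbd = μ.restrict Wbd := by
  ext s hs
  have hsW := hs.inter isOpen_Wbd.measurableSet
  rw [Measure.restrict_apply hs, Measure.restrict_apply hs, Measure.map_apply measurable_fst hsW,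
    h.measure_preimage_fst inter_subset_right hsW]

theorem restrict_map_snd (h : IsCoupling π μ ν) :
    (π.map Prod.snd).restrict Wbd = ν.restrict Wbd := by
  ext s hs
  have hsW := hs.inter isOpen_Wbd.measurableSet
  rw [Measure.restrict_apply hs, Measure.restrict_apply hs, Measure.map_apply measurable_snd hsW,
    h.measure_preimage_snd inter_subset_right hsW]

variable {E : Type*} [NormedAddCommGroup E] [NormedSpace ℝ E] {f : P2 → E}

theorem integral_comp_fst (h : IsCoupling π μ ν) (hf : StronglyMeasurable f)
    (hfW : ∀ x ∉ Wbd, f x = 0) : ∫ p, f p.1 ∂π = ∫ x, f x ∂μ := by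
  rw [← integral_map measurable_fst.aemeasurable hf.aestronglyMeasurable,
    ← setIntegral_eq_integral_of_forall_compl_eq_zero hfW, h.restrict_map_fst,
    setIntegral_eq_integral_of_forall_compl_eq_zero hfW]

theorem integral_comp_snd (h : IsCoupling π μ ν) (hf : StronglyMeasurable f)
    (hfW : ∀ x ∉ Wbd, f x = 0) : ∫ p, f p.2 ∂π = ∫ x, f x ∂ν := by
  rw [← integral_map measurable_snd.aemeasurable hf.aestronglyMeasurable,
    ← setIntegral_eq_integral_of_forall_compl_eq_zero hfW, h.restrict_map_snd,
    setIntegral_eq_integral_of_forall_compl_eq_zero hfW]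

end IsCoupling

section Estimate

variable {E : Type*} [NormedAddCommGroup E] [NormedSpace ℝ E] {f : P2 → E}

theorem norm_integral_sub_integral_le_of_costInf_lt (hf : Continuous f) (hfc : HasCompactSupport f)
    {r η ε : ℝ} (hr : cthickening r (tsupport f) ⊆ Wbd) (hηr : η ≤ r)
    (hfη : ∀ x y, dist x y < η → dist (f x) (f y) ≤ ε)
    {π : Measure (P2 × P2)} {μ ν : Measure P2} (hπ : IsCoupling π ν μ)
    (hcost : costInf π < ENNReal.ofReal η) (hμ : μ (cthickening r (tsupport f)) < ⊤) :
    ‖∫ x, f x ∂ν - ∫ x, f x ∂μ‖ ≤ ε * μ.real (cthickening r (tsupport f)) := by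
  set K' := cthickening r (tsupport f)
  have hπK' : π (K' ×ˢ K') ≤ μ K' := (measure_mono fun _ hp => hp.2).trans_eq
    (hπ.measure_preimage_snd hr isClosed_cthickening.measurableSet)
  have hπK'_lt : π (K' ×ˢ K') < ⊤ := hπK'.trans_lt hμ
  have hloc := ae_mem_cthickening_prod_of_costInf_lt hr hηr hcost
  have hfW : ∀ x ∉ Wbd, f x = 0 := fun x hx =>
    image_eq_zero_of_notMem_tsupport fun h => hx (hr (self_subset_cthickening _ h))
  have hε : 0 ≤ ε := by
    have hη : 0 < η := ENNReal.ofReal_pos.1 (pos_of_gt hcost)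
    exact dist_nonneg.trans (hfη 0 0 (by rwa [dist_self]))
  have hfst : ∫ p in K' ×ˢ K', f p.1 ∂π = ∫ p, f p.1 ∂π :=
    setIntegral_eq_integral_of_ae_compl_eq_zero <| hloc.mono fun p hp hpK' =>
      image_eq_zero_of_notMem_tsupport fun h => hpK' (hp (Or.inl h)).1
  have hsnd : ∫ p in K' ×ˢ K', f p.2 ∂π = ∫ p, f p.2 ∂π :=
    setIntegral_eq_integral_of_ae_compl_eq_zero <| hloc.mono fun p hp hpK' =>
      image_eq_zero_of_notMem_tsupport fun h => hpK' (hp (Or.inr h)).1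
  obtain ⟨M, hM⟩ := hf.bounded_above_of_compact_support hfc
  have hint_fst : IntegrableOn (fun p => f p.1) (K' ×ˢ K') π :=
    Measure.integrableOn_of_bounded hπK'_lt.ne (hf.comp continuous_fst).aestronglyMeasurable
      (ae_of_all _ fun p => hM p.1)
  have hint_snd : IntegrableOn (fun p => f p.2) (K' ×ˢ K') π :=
    Measure.integrableOn_of_bounded hπK'_lt.ne (hf.comp continuous_snd).aestronglyMeasurable
      (ae_of_all _ fun p => hM p.2)
  have hdiff : ∀ᵐ p ∂π.restrict (K' ×ˢ K'), ‖f p.1 - f p.2‖ ≤ ε := by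
    refine ae_restrict_of_ae (hloc.mono fun p hp => ?_)
    by_cases h : p.1 ∈ tsupport f ∨ p.2 ∈ tsupport f
    · rw [← dist_eq_norm]
      exact hfη _ _ (hp h).2
    · rw [not_or] at h
      rwa [image_eq_zero_of_notMem_tsupport h.1, image_eq_zero_of_notMem_tsupport h.2, sub_zero,
        norm_zero]
  calc ‖∫ x, f x ∂ν - ∫ x, f x ∂μ‖ = ‖∫ p in K' ×ˢ K', (f p.1 - f p.2) ∂π‖ := by
        rw [← hπ.integral_comp_fst hf.stronglyMeasurable hfW,
          ← hπ.integral_comp_snd hf.stronglyMeasurable hfW, ← hfst, ← hsnd,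
          integral_sub hint_fst hint_snd]
    _ ≤ ε * π.real (K' ×ˢ K') := norm_setIntegral_le_of_norm_le_const_ae hπK'_lt hdiff
    _ ≤ ε * μ.real K' := by
        gcongr
        exact ENNReal.toReal_mono hμ.ne hπK'

end Estimate

theorem linear_representation_continuous_general
    (f : P2 → ℝ) (hf : IsCcW f)
    (μ : Measure P2) (hμ : μ ∈ MInf)
    (u : ℕ → Measure P2)
    (hconv : Tendsto (fun n => OT (u n) μ) atTop (𝓝 0)) :
    Tendsto (fun n => ∫ x, f x ∂(u n)) atTop (𝓝 (∫ x, f x ∂μ)) := by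
  obtain ⟨hfc, hfcs, hfW⟩ := hf
  obtain ⟨r, hr, hrW⟩ := hfcs.isCompact.exists_cthickening_subset_open isOpen_Wbd hfW
  have hμK' : μ (cthickening r (tsupport f)) < ⊤ := hμ.1.2.2.2 _ hrW hfcs.isCompact.cthickening
  set C := μ.real (cthickening r (tsupport f))
  have hC : 0 < C + 1 := by positivity
  refine Metric.tendsto_nhds.2 fun ε hε => ?_
  obtain ⟨η, hη, hfη⟩ := Metric.uniformContinuous_iff.1
    (hfcs.uniformContinuous_of_continuous hfc) (ε / (C + 1)) (by positivity)
  filter_upwards [hconv.eventually_lt_const (ENNReal.ofReal_pos.2 (lt_min hη hr))] with n hn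
  obtain ⟨π, hπ, hcost⟩ := exists_isCoupling_costInf_lt hn
  calc dist (∫ x, f x ∂u n) (∫ x, f x ∂μ) ≤ ε / (C + 1) * C := by
        rw [dist_eq_norm]
        exact norm_integral_sub_integral_le_of_costInf_lt hfc hfcs hrW (min_le_right η r)
          (fun x y hxy => (hfη (hxy.trans_le (min_le_left η r))).le) hπ hcost hμK'
    _ < ε / (C + 1) * (C + 1) := by gcongr; linarith
    _ = ε := div_mul_cancel₀ ε hC.ne'

/-- For every `f ∈ C_c(W)`, the linear representation `μ ↦ ∫ f dμ` is
continuous on `(M^∞, OT_∞)`: if `OT_∞(μ_n, μ) → 0` then `∫ f dμ_n → ∫ f dμ`. -/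
theorem linear_representation_continuous
    (f : P2 → ℝ) (hf : IsCcW f)
    (μ : Measure P2) (hμ : μ ∈ MInf)
    (u : ℕ → Measure P2) (hu : ∀ n, u n ∈ MInf)
    (hconv : Tendsto (fun n => OT (u n) μ) atTop (𝓝 0)) :
    Tendsto (fun n => ∫ x, f x ∂(u n)) atTop (𝓝 (∫ x, f x ∂μ)) :=
  linear_representation_continuous_general f hf μ hμ u hconv
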